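/- arXiv:2503.15813 — 4 statements merged into one kernel-verified Lean document; each statement's English description precedes it below -/
import Mathlib

section
/- Let m ≥ 2. For every R > 0, the first nonzero Neumann eigenvalue of the origin-centered ball of radius R in Gauss space satisfies μ_1(B_R) > 1. -/
/-!
The radial profile `r` of the coordinate function `x₁` is an eigenfunction of the
Ornstein–Uhlenbeck operator with eigenvalue `1`, but it violates the Neumann condition at `R`.
With `m = k + 2`, `w = e^{-r²/2}` and `c = e^{-R²/2} / R²`, the function
`G = (w - c r²) r^k φ²` vanishes at `r = 0` and at `r = R`, and
`(φ'² + (k+1) φ²/r²) w r^{k+1} - (1 + c) φ² w r^{k+1} - G'`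
`  = (w - c r²) r^{k+1} (φ' - φ/r)² + c r^{k+1} ((k + 3 - w) φ² + r² φ'²) ≥ 0`:
a ground-state substitution with respect to `r`, corrected by `-c r^{k+2} φ²` so that the
boundary term at `R` cancels. Integrating over `(0, R)` gives `μ₁(B_R) ≥ 1 + e^{-R²/2} / R²`.
-/

open MeasureTheory Real Set

noncomputable section

/-- A trial function for the radial variational problem on the ball of radius
`R`: `φ ∈ C¹([0,R])` (with derivative `φ'`), `φ(0) = 0`, `φ'(R) = 0`, and `φ`
not identically zero on `[0,R]`. -/
def IsRadialTrial (R : ℝ) (φ φ' : ℝ → ℝ) : Prop :=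
  (∀ r ∈ Icc (0 : ℝ) R, HasDerivWithinAt φ (φ' r) (Icc (0 : ℝ) R) r) ∧
  ContinuousOn φ' (Icc (0 : ℝ) R) ∧
  φ 0 = 0 ∧ φ' R = 0 ∧ ∃ r ∈ Icc (0 : ℝ) R, φ r ≠ 0

/-- The first nonzero Neumann eigenvalue `μ₁(B_R)` of the Ornstein–Uhlenbeck
operator on the origin-centered ball `B_R ⊆ ℝ^m`, via its radial variational
characterization:
`μ₁(B_R) = inf { ∫₀^R (φ'² + (m-1)φ²/r²) e^{-r²/2} r^{m-1} dr
              / ∫₀^R φ² e^{-r²/2} r^{m-1} dr }`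
over `φ ∈ C¹([0,R])` with `φ(0) = 0`, `φ'(R) = 0`, `φ ≢ 0`. -/
def mu1Ball (m : ℕ) (R : ℝ) : ℝ :=
  sInf { q : ℝ | ∃ φ φ' : ℝ → ℝ, IsRadialTrial R φ φ' ∧
    q = (∫ r in Ioo (0 : ℝ) R,
          (φ' r ^ 2 + ((m : ℝ) - 1) * φ r ^ 2 / r ^ 2) *
            Real.exp (-r ^ 2 / 2) * r ^ (m - 1)) /
        (∫ r in Ioo (0 : ℝ) R,
          φ r ^ 2 * Real.exp (-r ^ 2 / 2) * r ^ (m - 1)) }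

theorem ContinuousOn.update_slope {𝕜 F : Type*} [NontriviallyNormedField 𝕜] [DecidableEq 𝕜]
    [NormedAddCommGroup F] [NormedSpace 𝕜 F] {f : 𝕜 → F} {f' : F} {s : Set 𝕜} {a : 𝕜}
    (hf : ContinuousOn f s) (hd : HasDerivWithinAt f f' s a) :
    ContinuousOn (Function.update (slope f a) a f') s := by
  intro x hx
  rcases eq_or_ne x a with rfl | hne
  · exact continuousWithinAt_update_same.2 (hasDerivWithinAt_iff_tendsto_slope.1 hd)
  · rw [continuousWithinAt_update_of_ne hne]
    exact ((continuousWithinAt_id.sub continuousWithinAt_const).inv₀ (sub_ne_zero.2 hne)).smul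
      ((hf x hx).sub continuousWithinAt_const)

-- The integrands of `mu1Ball (k + 2)`; writing `m = k + 2` avoids the truncated `m - 1`.
def gaussEnergyDensity (k : ℕ) (φ φ' : ℝ → ℝ) (r : ℝ) : ℝ :=
  (φ' r ^ 2 + ((k : ℝ) + 1) * φ r ^ 2 / r ^ 2) * Real.exp (-r ^ 2 / 2) * r ^ (k + 1)

def gaussMassDensity (k : ℕ) (φ : ℝ → ℝ) (r : ℝ) : ℝ :=
  φ r ^ 2 * Real.exp (-r ^ 2 / 2) * r ^ (k + 1)

def gaussGap (R : ℝ) : ℝ := Real.exp (-R ^ 2 / 2) / R ^ 2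

def gapCorrection (k : ℕ) (R : ℝ) (φ : ℝ → ℝ) (r : ℝ) : ℝ :=
  (Real.exp (-r ^ 2 / 2) - gaussGap R * r ^ 2) * r ^ k * φ r ^ 2

def gapCorrectionDeriv (k : ℕ) (R : ℝ) (φ φ' : ℝ → ℝ) (r : ℝ) : ℝ :=
  ((-r * Real.exp (-r ^ 2 / 2) - 2 * gaussGap R * r) * r ^ k
      + (Real.exp (-r ^ 2 / 2) - gaussGap R * r ^ 2) * (k * r ^ k / r)) * φ r ^ 2
    + (Real.exp (-r ^ 2 / 2) - gaussGap R * r ^ 2) * r ^ k * (2 * φ r * φ' r)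

lemma gaussGap_pos {R : ℝ} (hR : R ≠ 0) : 0 < gaussGap R := by
  unfold gaussGap
  positivity

section Radial

variable {k : ℕ} {R : ℝ} {φ φ' : ℝ → ℝ}

lemma continuousOn_gaussMassDensity {s : Set ℝ} (hφ : ContinuousOn φ s) :
    ContinuousOn (gaussMassDensity k φ) s := by
  unfold gaussMassDensity
  fun_prop

lemma integrableOn_gaussEnergyDensity
    (hd : ∀ r ∈ Icc (0 : ℝ) R, HasDerivWithinAt φ (φ' r) (Icc (0 : ℝ) R) r)
    (hc : ContinuousOn φ' (Icc (0 : ℝ) R)) (h0 : φ 0 = 0) (hR : 0 ≤ R) :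
    IntegrableOn (gaussEnergyDensity k φ φ') (Icc 0 R) := by
  have hφ : ContinuousOn φ (Icc 0 R) := fun r hr => (hd r hr).continuousWithinAt
  set g := Function.update (slope φ 0) 0 (φ' 0)
  have hg : ContinuousOn g (Icc 0 R) := hφ.update_slope (hd 0 (left_mem_Icc.2 hR))
  refine ContinuousOn.integrableOn_Icc (f := fun r =>
      (φ' r ^ 2 + ((k : ℝ) + 1) * g r ^ 2) * Real.exp (-r ^ 2 / 2) * r ^ (k + 1))
    (by fun_prop) |>.congr_fun (fun r _ => ?_) measurableSet_Icc
  rcases eq_or_ne r 0 with rfl | hr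
  · simp [gaussEnergyDensity]
  · simp [gaussEnergyDensity, g, Function.update_of_ne hr, slope_def_field, h0, div_pow,
      mul_div_assoc]

lemma gapCorrection_zero (h0 : φ 0 = 0) : gapCorrection k R φ 0 = 0 := by
  simp [gapCorrection, h0]

lemma gapCorrection_self (hR : R ≠ 0) : gapCorrection k R φ R = 0 := by
  simp [gapCorrection, gaussGap, hR]

lemma continuousOn_gapCorrection {s : Set ℝ} (hφ : ContinuousOn φ s) :
    ContinuousOn (gapCorrection k R φ) s := by
  unfold gapCorrection
  fun_prop

lemma hasDerivAt_gapCorrection {r : ℝ} (hr : r ≠ 0) (hφ : HasDerivAt φ (φ' r) r) :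
    HasDerivAt (gapCorrection k R φ) (gapCorrectionDeriv k R φ φ' r) r := by
  have hweight : HasDerivAt (fun s => Real.exp (-s ^ 2 / 2) - gaussGap R * s ^ 2)
      (-r * Real.exp (-r ^ 2 / 2) - 2 * gaussGap R * r) r :=
    ((((hasDerivAt_pow 2 r).neg.div_const 2).exp).sub
      ((hasDerivAt_pow 2 r).const_mul (gaussGap R))).congr_deriv
      (by simp only [Pi.neg_apply]; ring)
  have hpow : HasDerivAt (fun s : ℝ => s ^ k) (k * r ^ k / r) r := by
    refine (hasDerivAt_pow k r).congr_deriv ?_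
    rcases k with _ | k
    · simp
    · rw [Nat.add_sub_cancel, pow_succ]
      field_simp
  exact ((hweight.mul hpow).mul (hφ.pow 2)).congr_deriv
    (by simp only [gapCorrectionDeriv, Pi.pow_apply, Pi.mul_apply]; ring)

lemma gaussEnergyDensity_sub_gaussMassDensity_sub_gapCorrectionDeriv {r : ℝ} (hr : r ≠ 0) :
    gaussEnergyDensity k φ φ' r - (1 + gaussGap R) * gaussMassDensity k φ r
        - gapCorrectionDeriv k R φ φ' r
      = (Real.exp (-r ^ 2 / 2) - gaussGap R * r ^ 2) * r ^ (k + 1) * (φ' r - φ r / r) ^ 2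
        + gaussGap R * r ^ (k + 1) * (((k : ℝ) + 3 - Real.exp (-r ^ 2 / 2)) * φ r ^ 2
          + r ^ 2 * φ' r ^ 2) := by
  unfold gaussEnergyDensity gaussMassDensity gapCorrectionDeriv
  field_simp
  ring

lemma gaussGap_mul_sq_le_exp {r : ℝ} (hr : r ∈ Ioc 0 R) :
    gaussGap R * r ^ 2 ≤ Real.exp (-r ^ 2 / 2) :=
  calc gaussGap R * r ^ 2 = Real.exp (-R ^ 2 / 2) * (r / R) ^ 2 := by
        rw [gaussGap, div_pow]; ring
    _ ≤ Real.exp (-R ^ 2 / 2) * 1 := by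
        gcongr
        exact pow_le_one₀ (div_nonneg hr.1.le (hr.1.trans_le hr.2).le)
          ((div_le_one (hr.1.trans_le hr.2)).2 hr.2)
    _ ≤ Real.exp (-r ^ 2 / 2) := by
        rw [mul_one, Real.exp_le_exp]
        nlinarith [hr.1, hr.2]

lemma gapCorrectionDeriv_le {r : ℝ} (hr : r ∈ Ioc 0 R) :
    gapCorrectionDeriv k R φ φ' r
      ≤ gaussEnergyDensity k φ φ' r - (1 + gaussGap R) * gaussMassDensity k φ r := by
  rw [← sub_nonneg, gaussEnergyDensity_sub_gaussMassDensity_sub_gapCorrectionDeriv hr.1.ne']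
  have hweight := sub_nonneg.2 (gaussGap_mul_sq_le_exp hr)
  have hcoeff : 0 ≤ (k : ℝ) + 3 - Real.exp (-r ^ 2 / 2) := by
    linarith [Real.exp_le_one_iff.2 (by nlinarith : -r ^ 2 / 2 ≤ 0), k.cast_nonneg (α := ℝ)]
  have hgap := gaussGap_pos (hr.1.trans_le hr.2).ne'
  have hr0 := hr.1
  positivity

lemma one_add_gaussGap_mul_integral_le (hR : 0 < R)
    (hd : ∀ r ∈ Icc (0 : ℝ) R, HasDerivWithinAt φ (φ' r) (Icc (0 : ℝ) R) r)
    (hc : ContinuousOn φ' (Icc (0 : ℝ) R)) (h0 : φ 0 = 0) :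
    (1 + gaussGap R) * ∫ r in Ioo 0 R, gaussMassDensity k φ r
      ≤ ∫ r in Ioo 0 R, gaussEnergyDensity k φ φ' r := by
  have hφ : ContinuousOn φ (Icc 0 R) := fun r hr => (hd r hr).continuousWithinAt
  have hmass : IntegrableOn (gaussMassDensity k φ) (Icc 0 R) :=
    (continuousOn_gaussMassDensity hφ).integrableOn_Icc
  have henergy := integrableOn_gaussEnergyDensity (k := k) hd hc h0 hR.le
  have hderiv : ∀ r ∈ Ioo 0 R,
      HasDerivWithinAt (gapCorrection k R φ) (gapCorrectionDeriv k R φ φ' r) (Ioi r) r :=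
    fun r hr => (hasDerivAt_gapCorrection hr.1.ne'
      ((hd r (Ioo_subset_Icc_self hr)).hasDerivAt (Icc_mem_nhds hr.1 hr.2))).hasDerivWithinAt
  have hftc := intervalIntegral.sub_le_integral_of_hasDeriv_right_of_le hR.le
    (continuousOn_gapCorrection hφ) hderiv
    (φ := fun r => gaussEnergyDensity k φ φ' r - (1 + gaussGap R) * gaussMassDensity k φ r)
    (henergy.sub (hmass.const_mul _)) (fun r hr => gapCorrectionDeriv_le (Ioo_subset_Ioc_self hr))
  rw [gapCorrection_self hR.ne', gapCorrection_zero h0, sub_zero,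
    intervalIntegral.integral_of_le hR.le, integral_Ioc_eq_integral_Ioo,
    integral_sub (henergy.mono_set Ioo_subset_Icc_self)
      ((hmass.mono_set Ioo_subset_Icc_self).const_mul _), integral_const_mul] at hftc
  linarith

lemma integral_gaussMassDensity_pos (hφ : ContinuousOn φ (Icc 0 R)) (h0 : φ 0 = 0)
    (hne : ∃ r ∈ Icc (0 : ℝ) R, φ r ≠ 0) :
    0 < ∫ r in Ioo 0 R, gaussMassDensity k φ r := by
  obtain ⟨r, hr, hφr⟩ := hne
  have hr0 : 0 < r := hr.1.lt_of_ne (by rintro rfl; exact hφr h0)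
  have hR : 0 < R := hr0.trans_le hr.2
  rw [← integral_Ioc_eq_integral_Ioo, ← intervalIntegral.integral_of_le hR.le]
  refine intervalIntegral.integral_pos hR (continuousOn_gaussMassDensity hφ)
    (fun x hx => ?_) ⟨r, hr, ?_⟩
  · have := hx.1
    unfold gaussMassDensity
    positivity
  · unfold gaussMassDensity
    positivity

end Radial

lemma isRadialTrial_cubic {R : ℝ} (hR : 0 < R) :
    IsRadialTrial R (fun r => 3 * R * r ^ 2 - 2 * r ^ 3) (fun r => 6 * R * r - 6 * r ^ 2) := by
  refine ⟨fun r _ => ?_, by fun_prop, by simp, by ring, R, right_mem_Icc.2 hR.le, ?_⟩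
  · exact (((hasDerivAt_pow 2 r).const_mul (3 * R)).sub
      ((hasDerivAt_pow 3 r).const_mul 2)).hasDerivWithinAt.congr_deriv (by push_cast; ring)
  · ring_nf
    positivity

theorem one_add_gaussGap_le_mu1Ball (m : ℕ) (hm : 2 ≤ m) {R : ℝ} (hR : 0 < R) :
    1 + gaussGap R ≤ mu1Ball m R := by
  obtain ⟨k, rfl⟩ : ∃ k, m = k + 2 := ⟨m - 2, by omega⟩
  have hcast : ((k + 2 : ℕ) : ℝ) - 1 = k + 1 := by push_cast; ring
  refine le_csInf ⟨_, _, _, isRadialTrial_cubic hR, rfl⟩ ?_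
  rintro q ⟨φ, φ', ⟨hd, hc, h0, -, hne⟩, rfl⟩
  rw [hcast]
  exact (le_div_iff₀ (integral_gaussMassDensity_pos
    (fun r hr => (hd r hr).continuousWithinAt) h0 hne)).2
    (one_add_gaussGap_mul_integral_le hR hd hc h0)

/-- **Lemma 2.2.** For `m ≥ 2` and every `R > 0`, the first nonzero Neumann
eigenvalue of the origin-centered ball of radius `R` in Gauss space satisfies
`μ₁(B_R) > 1`. -/
theorem mu1Ball_gt_one (m : ℕ) (hm : 2 ≤ m) (R : ℝ) (hR : 0 < R) :
    1 < mu1Ball m R :=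
  (lt_add_of_pos_right 1 (gaussGap_pos hR.ne')).trans_le (one_add_gaussGap_le_mu1Ball m hm hR)
end
end

section
/- Let m ≥ 2, R > 0, μ ∈ ℝ, and let g ∈ C¹([0,R]) ∩ C²((0,R)) satisfy the ordinary differential equation g''(r) + ((m−1)/r − r) g'(r) + (μ − (m−1)/r²) g(r) = 0 for all r ∈ (0,R), together with g(0) = 0 and g'(R) = 0. Then μ ∫_0^R g(r)² e^{−r²/2} r^{m−1} dr = ∫_0^R (g'(r)² + (m−1) g(r)²/r²) e^{−r²/2} r^{m−1} dr, where both integrals are finite. -/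
open MeasureTheory Real Set

/-!
Write `w(r) = e^{-r²/2} r^{m-1}`. Since `w' = ((m-1)/r - r) w`, the equation is the
Sturm–Liouville equation `(w g')' = ((m-1)/r² - μ) w g`, so `g w g'` has derivative
`(g'² + (m-1) g²/r² - μ g²) w`; integrating over `[0,R]` the boundary terms vanish because
`g 0 = 0` and `g' R = 0`. The only singular integrand is `g²/r² · w`, which is bounded since
`|g r| ≤ r · sup |g'|` by the mean value theorem.
-/

noncomputable def radialGaussWeight (n : ℕ) (r : ℝ) : ℝ := exp (-r ^ 2 / 2) * r ^ n

lemma continuous_radialGaussWeight (n : ℕ) : Continuous (radialGaussWeight n) := by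
  unfold radialGaussWeight
  fun_prop

lemma hasDerivAt_radialGaussWeight (n : ℕ) {r : ℝ} (hr : r ≠ 0) :
    HasDerivAt (radialGaussWeight n) ((n / r - r) * radialGaussWeight n r) r := by
  have hquad : HasDerivAt (fun s : ℝ => -s ^ 2 / 2) (-r) r :=
    ((hasDerivAt_pow 2 r).neg.div_const 2).congr_deriv (by ring)
  refine (hquad.exp.mul (hasDerivAt_pow n r)).congr_deriv ?_
  unfold radialGaussWeight
  rcases n with _ | n
  · simp [mul_comm]
  · field_simp
    push_cast
    ring

lemma hasDerivAt_mul_radialGaussWeight_of_ode {n : ℕ} {μ r : ℝ} {g g' g'' : ℝ → ℝ}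
    (hr : r ≠ 0) (hg' : HasDerivAt g' (g'' r) r)
    (hode : g'' r + (n / r - r) * g' r + (μ - n / r ^ 2) * g r = 0) :
    HasDerivAt (fun s => g' s * radialGaussWeight n s)
      ((n / r ^ 2 - μ) * g r * radialGaussWeight n r) r := by
  refine (hg'.mul (hasDerivAt_radialGaussWeight n hr)).congr_deriv ?_
  linear_combination radialGaussWeight n r * hode

lemma hasDerivAt_mul_deriv_mul_radialGaussWeight_of_ode {n : ℕ} {μ r : ℝ}
    {g g' g'' : ℝ → ℝ} (hr : r ≠ 0) (hg : HasDerivAt g (g' r) r)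
    (hg' : HasDerivAt g' (g'' r) r)
    (hode : g'' r + (n / r - r) * g' r + (μ - n / r ^ 2) * g r = 0) :
    HasDerivAt (fun s => g s * (g' s * radialGaussWeight n s))
      ((g' r ^ 2 + n * g r ^ 2 / r ^ 2) * radialGaussWeight n r -
        μ * (g r ^ 2 * radialGaussWeight n r)) r := by
  refine (hg.mul (hasDerivAt_mul_radialGaussWeight_of_ode hr hg' hode)).congr_deriv ?_
  ring

lemma integrableOn_sq_div_sq_mul {g g' w : ℝ → ℝ} {R : ℝ}
    (hg : ∀ r ∈ Icc (0 : ℝ) R, HasDerivWithinAt g (g' r) (Icc 0 R) r)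
    (hg'c : ContinuousOn g' (Icc 0 R)) (h0 : g 0 = 0) (hw : ContinuousOn w (Icc 0 R)) :
    IntegrableOn (fun r => g r ^ 2 / r ^ 2 * w r) (Ioo 0 R) := by
  obtain ⟨M, hM⟩ := isCompact_Icc.exists_bound_of_continuousOn hg'c
  have hslope : ∀ r ∈ Ioo 0 R, ‖(g r / r) ^ 2‖ ≤ M ^ 2 := by
    intro r hr
    have hmvt := Convex.norm_image_sub_le_of_norm_hasDerivWithin_le hg hM (convex_Icc 0 R)
      (left_mem_Icc.2 (hr.1.trans hr.2).le) (Ioo_subset_Icc_self hr)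
    rw [h0, sub_zero, sub_zero, Real.norm_eq_abs, Real.norm_eq_abs, abs_of_pos hr.1] at hmvt
    rw [norm_pow, Real.norm_eq_abs, abs_div, abs_of_pos hr.1]
    exact pow_le_pow_left₀ (div_nonneg (abs_nonneg _) hr.1.le) ((div_le_iff₀ hr.1).2 hmvt) 2
  have hgc : ContinuousOn g (Ioo 0 R) := fun r hr =>
    (hg r (Ioo_subset_Icc_self hr)).continuousWithinAt.mono Ioo_subset_Icc_self
  have hmeas : AEStronglyMeasurable (fun r => (g r / r) ^ 2) (volume.restrict (Ioo 0 R)) :=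
    ((hgc.div continuousOn_id fun r hr => hr.1.ne').pow 2).aestronglyMeasurable measurableSet_Ioo
  rw [IntegrableOn]
  simpa only [div_pow] using (hw.integrableOn_Icc.mono_set Ioo_subset_Icc_self).bdd_mul hmeas
    ((ae_restrict_mem measurableSet_Ioo).mono hslope)

theorem radial_eigenvalue_identity_general
    (m : ℕ) (hm : 2 ≤ m) (R μ : ℝ) (hR : 0 < R) (g g' g'' : ℝ → ℝ)
    (hg : ∀ r ∈ Icc (0 : ℝ) R, HasDerivWithinAt g (g' r) (Icc (0 : ℝ) R) r)
    (hg'cont : ContinuousOn g' (Icc (0 : ℝ) R))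
    (hg' : ∀ r ∈ Ioo (0 : ℝ) R, HasDerivAt g' (g'' r) r)
    (hode : ∀ r ∈ Ioo (0 : ℝ) R,
      g'' r + (((m : ℝ) - 1) / r - r) * g' r + (μ - ((m : ℝ) - 1) / r ^ 2) * g r = 0)
    (h0 : g 0 = 0) (hRderiv : g' R = 0) :
    IntegrableOn (fun r => g r ^ 2 * Real.exp (-r ^ 2 / 2) * r ^ (m - 1))
        (Ioo (0 : ℝ) R) volume ∧
    IntegrableOn (fun r =>
        (g' r ^ 2 + ((m : ℝ) - 1) * g r ^ 2 / r ^ 2) *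
          Real.exp (-r ^ 2 / 2) * r ^ (m - 1)) (Ioo (0 : ℝ) R) volume ∧
    μ * ∫ r in Ioo (0 : ℝ) R, g r ^ 2 * Real.exp (-r ^ 2 / 2) * r ^ (m - 1) =
      ∫ r in Ioo (0 : ℝ) R,
        (g' r ^ 2 + ((m : ℝ) - 1) * g r ^ 2 / r ^ 2) *
          Real.exp (-r ^ 2 / 2) * r ^ (m - 1) := by
  obtain ⟨n, rfl⟩ : ∃ n, m = n + 1 := ⟨m - 1, by omega⟩
  have hn : ((n + 1 : ℕ) : ℝ) - 1 = n := by push_cast; ring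
  have hweight : ∀ r, exp (-r ^ 2 / 2) * r ^ n = radialGaussWeight n r := fun _ => rfl
  simp only [Nat.add_sub_cancel, hn, mul_assoc, hweight] at hode ⊢
  have hgc : ContinuousOn g (Icc 0 R) := fun r hr => (hg r hr).continuousWithinAt
  have hwc := (continuous_radialGaussWeight n).continuousOn (s := Icc 0 R)
  have hG : IntegrableOn (fun r => g r ^ 2 * radialGaussWeight n r) (Ioo 0 R) :=
    ((hgc.pow 2).mul hwc).integrableOn_Icc.mono_set Ioo_subset_Icc_self
  have hE : IntegrableOn (fun r => (g' r ^ 2 + n * g r ^ 2 / r ^ 2) * radialGaussWeight n r)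
      (Ioo 0 R) := by
    have hg'w : IntegrableOn (fun r => g' r ^ 2 * radialGaussWeight n r) (Ioo 0 R) :=
      ((hg'cont.pow 2).mul hwc).integrableOn_Icc.mono_set Ioo_subset_Icc_self
    refine (hg'w.add ((integrableOn_sq_div_sq_mul hg hg'cont h0 hwc).const_mul n)).congr_fun
      (fun r _ => by rw [Pi.add_apply]; ring) measurableSet_Ioo
  refine ⟨hG, hE, ?_⟩
  have hFTC := intervalIntegral.integral_eq_sub_of_hasDerivAt_of_le hR.le
    (hgc.mul (hg'cont.mul hwc)) (fun r hr =>
      hasDerivAt_mul_deriv_mul_radialGaussWeight_of_ode hr.1.ne'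
        ((hg r (Ioo_subset_Icc_self hr)).hasDerivAt (Icc_mem_nhds hr.1 hr.2)) (hg' r hr)
        (hode r hr))
    ((intervalIntegrable_iff_integrableOn_Ioo_of_le hR.le).2 (hE.sub (hG.const_mul μ)))
  rw [intervalIntegral.integral_of_le hR.le, integral_Ioc_eq_integral_Ioo,
    integral_sub hE (hG.const_mul μ), integral_const_mul] at hFTC
  simp only [Pi.mul_apply, h0, hRderiv, zero_mul, mul_zero, sub_zero] at hFTC
  linarith

/-- **Identity (2.3).** Let `m ≥ 2`, `R > 0`, `μ ∈ ℝ`, and let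
`g ∈ C¹([0,R]) ∩ C²((0,R))` satisfy
`g'' + ((m-1)/r - r) g' + (μ - (m-1)/r²) g = 0` on `(0,R)`, with `g(0) = 0` and
`g'(R) = 0`. Then
`μ ∫₀^R g² e^{-r²/2} r^{m-1} dr = ∫₀^R (g'² + (m-1)g²/r²) e^{-r²/2} r^{m-1} dr`,
both integrals being finite. -/
theorem radial_eigenvalue_identity
    (m : ℕ) (hm : 2 ≤ m) (R μ : ℝ) (hR : 0 < R) (g g' g'' : ℝ → ℝ)
    (hg : ∀ r ∈ Icc (0 : ℝ) R, HasDerivWithinAt g (g' r) (Icc (0 : ℝ) R) r)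
    (hg'cont : ContinuousOn g' (Icc (0 : ℝ) R))
    (hg' : ∀ r ∈ Ioo (0 : ℝ) R, HasDerivAt g' (g'' r) r)
    (hg''cont : ContinuousOn g'' (Ioo (0 : ℝ) R))
    (hode : ∀ r ∈ Ioo (0 : ℝ) R,
      g'' r + (((m : ℝ) - 1) / r - r) * g' r + (μ - ((m : ℝ) - 1) / r ^ 2) * g r = 0)
    (h0 : g 0 = 0) (hRderiv : g' R = 0) :
    IntegrableOn (fun r => g r ^ 2 * Real.exp (-r ^ 2 / 2) * r ^ (m - 1))
        (Ioo (0 : ℝ) R) volume ∧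
    IntegrableOn (fun r =>
        (g' r ^ 2 + ((m : ℝ) - 1) * g r ^ 2 / r ^ 2) *
          Real.exp (-r ^ 2 / 2) * r ^ (m - 1)) (Ioo (0 : ℝ) R) volume ∧
    μ * ∫ r in Ioo (0 : ℝ) R, g r ^ 2 * Real.exp (-r ^ 2 / 2) * r ^ (m - 1) =
      ∫ r in Ioo (0 : ℝ) R,
        (g' r ^ 2 + ((m : ℝ) - 1) * g r ^ 2 / r ^ 2) *
          Real.exp (-r ^ 2 / 2) * r ^ (m - 1) :=
  radial_eigenvalue_identity_general m hm R μ hR g g' g'' hg hg'cont hg' hode h0 hRderiv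
end

section
/- Let m ≥ 2 and R > 0, and let g ∈ C¹([0,R]) ∩ C²((0,R)) be a nonnegative, not identically zero function satisfying g''(r) + ((m−1)/r − r) g'(r) + (μ_1(B_R) − (m−1)/r²) g(r) = 0 for all r ∈ (0,R), with g(0) = 0 and g'(R) = 0. Then g'(r) > 0 for all r ∈ (0,R). -/
/-!
Suppose `g'(r₁) ≤ 0` for some `r₁ ∈ (0, R)`. By uniqueness for the linear ODE, the nonnegative,
nontrivial `g` is positive on `(0, R)`, so the mean value and intermediate value theorems give
`r₀ ∈ (0, r₁]` with `g'(r₀) = 0`. With `w = e^{-r²/2} r^{m-1}`, the equation says that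
`(g g' w)' = (g'² + ((m-1)/r² - μ₁) g²) w`, so this integrand has integral `0` over `[0, r₀]`;
as `g > 0` there, `μ₁ ≥ (m-1)/r₀²`. On the other hand `g(min(r, r₀))` is an admissible trial
function, and by the same identity on `[0, r₀]` the bound `μ₁ ≤` its Rayleigh quotient becomes
`∫_{r₀}^R ((m-1)/r² - μ₁) w ≥ 0`, which forces `μ₁ < (m-1)/r₀²`.
-/

open MeasureTheory Real Set

noncomputable section

def radialWeight (m : ℕ) (r : ℝ) : ℝ := exp (-r ^ 2 / 2) * r ^ (m - 1)

def rayleighDeficit (m : ℕ) (μ : ℝ) (φ φ' : ℝ → ℝ) (r : ℝ) : ℝ :=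
  (φ' r ^ 2 + (((m : ℝ) - 1) / r ^ 2 - μ) * φ r ^ 2) * radialWeight m r

section RadialWeight

variable {m : ℕ}

@[fun_prop]
theorem continuous_radialWeight (m : ℕ) : Continuous (radialWeight m) := by
  unfold radialWeight; fun_prop

theorem radialWeight_pos {r : ℝ} (hr : 0 < r) : 0 < radialWeight m r := by
  unfold radialWeight; positivity

theorem hasDerivAt_radialWeight (hm : 1 ≤ m) {r : ℝ} (hr : r ≠ 0) :
    HasDerivAt (radialWeight m) ((((m : ℝ) - 1) / r - r) * radialWeight m r) r := by
  have hquad : HasDerivAt (fun r : ℝ => -r ^ 2 / 2) (-r) r := by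
    refine ((hasDerivAt_pow 2 r).neg.div_const 2).congr_deriv ?_
    push_cast; ring
  refine (hquad.exp.mul (hasDerivAt_pow (m - 1) r)).congr_deriv ?_
  rw [radialWeight, ← Nat.cast_pred hm]
  rcases m - 1 with _ | k
  · simp [mul_comm]
  · push_cast
    field_simp
    ring

end RadialWeight

section Integrability

variable {m : ℕ} {ρ : ℝ} {φ φ' : ℝ → ℝ}

theorem rayleighDeficit_eq_sub (μ : ℝ) :
    rayleighDeficit m μ φ φ' = fun r =>
      (φ' r ^ 2 + ((m : ℝ) - 1) * φ r ^ 2 / r ^ 2) * radialWeight m r -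
        μ * (φ r ^ 2 * radialWeight m r) := by
  ext r; simp only [rayleighDeficit]; ring

theorem intervalIntegrable_sq_mul_radialWeight (hρ : 0 ≤ ρ)
    (hφ : ContinuousOn φ (Icc 0 ρ)) :
    IntervalIntegrable (fun r => φ r ^ 2 * radialWeight m r) volume 0 ρ :=
  ((hφ.pow 2).mul (continuous_radialWeight m).continuousOn).intervalIntegrable_of_Icc hρ

theorem intervalIntegrable_rayleighNumerator (c : ℝ) (hρ : 0 ≤ ρ)
    (hφ : ∀ r ∈ Icc 0 ρ, HasDerivWithinAt φ (φ' r) (Icc 0 ρ) r)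
    (hφ' : ContinuousOn φ' (Icc 0 ρ)) (h0 : φ 0 = 0) :
    IntervalIntegrable (fun r => (φ' r ^ 2 + c * φ r ^ 2 / r ^ 2) * radialWeight m r)
      volume 0 ρ := by
  obtain ⟨M, hM⟩ := isCompact_Icc.exists_bound_of_continuousOn hφ'
  obtain ⟨W, hW⟩ := isCompact_Icc.exists_bound_of_continuousOn
    (continuous_radialWeight m).continuousOn (s := Icc 0 ρ)
  have hφc : ContinuousOn φ (Icc 0 ρ) := fun r hr => (hφ r hr).continuousWithinAt
  -- `φ(0) = 0` and `|φ'| ≤ M` give `|φ r| ≤ M r`, which tames the `1/r²` singularity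
  have hquot : ∀ r ∈ Ioc 0 ρ, φ r ^ 2 / r ^ 2 ≤ M ^ 2 := by
    intro r hr
    have := (convex_Icc 0 ρ).norm_image_sub_le_of_norm_hasDerivWithin_le hφ hM
      ⟨le_rfl, hρ⟩ (Ioc_subset_Icc_self hr)
    rw [h0, sub_zero, sub_zero, Real.norm_eq_abs, Real.norm_eq_abs, abs_of_pos hr.1] at this
    rw [div_le_iff₀ (pow_pos hr.1 2), ← mul_pow, ← sq_abs]
    exact pow_le_pow_left₀ (abs_nonneg _) this 2
  rw [intervalIntegrable_iff_integrableOn_Ioc_of_le hρ]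
  refine IntegrableOn.of_bound measure_Ioc_lt_top ?_ ((M ^ 2 + |c| * M ^ 2) * W)
    (ae_restrict_of_forall_mem measurableSet_Ioc fun r hr => ?_)
  · refine ContinuousOn.aestronglyMeasurable ?_ measurableSet_Ioc
    refine ContinuousOn.mul ?_ (continuous_radialWeight m).continuousOn
    exact ((hφ'.mono Ioc_subset_Icc_self).pow 2).add
      (((hφc.mono Ioc_subset_Icc_self).pow 2).const_smul c |>.div (continuousOn_pow 2)
        fun r hr => pow_ne_zero 2 hr.1.ne')
  · have hr' : r ∈ Icc 0 ρ := Ioc_subset_Icc_self hr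
    have hφ'r : φ' r ^ 2 ≤ M ^ 2 := by
      rw [← sq_abs]; exact pow_le_pow_left₀ (abs_nonneg _) (hM r hr') 2
    have hcq : |c * φ r ^ 2 / r ^ 2| ≤ |c| * M ^ 2 := by
      rw [mul_div_assoc, abs_mul, abs_of_nonneg (div_nonneg (sq_nonneg (φ r)) (sq_nonneg r))]
      exact mul_le_mul_of_nonneg_left (hquot r hr) (abs_nonneg c)
    rw [norm_mul]
    refine mul_le_mul ?_ (hW r hr') (norm_nonneg _) (by positivity)
    rw [Real.norm_eq_abs]
    calc |φ' r ^ 2 + c * φ r ^ 2 / r ^ 2| ≤ |φ' r ^ 2| + |c * φ r ^ 2 / r ^ 2| := abs_add_le _ _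
      _ ≤ M ^ 2 + |c| * M ^ 2 := by rw [abs_of_nonneg (sq_nonneg _)]; linarith

theorem intervalIntegrable_rayleighDeficit (μ : ℝ) (hρ : 0 ≤ ρ)
    (hφ : ∀ r ∈ Icc 0 ρ, HasDerivWithinAt φ (φ' r) (Icc 0 ρ) r)
    (hφ' : ContinuousOn φ' (Icc 0 ρ)) (h0 : φ 0 = 0) :
    IntervalIntegrable (rayleighDeficit m μ φ φ') volume 0 ρ := by
  rw [rayleighDeficit_eq_sub]
  exact (intervalIntegrable_rayleighNumerator _ hρ hφ hφ' h0).sub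
    ((intervalIntegrable_sq_mul_radialWeight hρ fun r hr =>
      (hφ r hr).continuousWithinAt).const_mul μ)

end Integrability

structure IsRadialSolution (m : ℕ) (μ ρ : ℝ) (g g' g'' : ℝ → ℝ) : Prop where
  hasDerivWithinAt : ∀ r ∈ Icc 0 ρ, HasDerivWithinAt g (g' r) (Icc 0 ρ) r
  continuousOn_deriv : ContinuousOn g' (Icc 0 ρ)
  hasDerivAt_deriv : ∀ r ∈ Ioo 0 ρ, HasDerivAt g' (g'' r) r
  ode : ∀ r ∈ Ioo 0 ρ,
    g'' r + (((m : ℝ) - 1) / r - r) * g' r + (μ - ((m : ℝ) - 1) / r ^ 2) * g r = 0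
  map_zero : g 0 = 0

namespace IsRadialSolution

variable {m : ℕ} {μ ρ R : ℝ} {g g' g'' : ℝ → ℝ}

theorem mono (h : IsRadialSolution m μ R g g' g'') (hρ : ρ ≤ R) :
    IsRadialSolution m μ ρ g g' g'' where
  hasDerivWithinAt r hr :=
    (h.hasDerivWithinAt r (Icc_subset_Icc_right hρ hr)).mono (Icc_subset_Icc_right hρ)
  continuousOn_deriv := h.continuousOn_deriv.mono (Icc_subset_Icc_right hρ)
  hasDerivAt_deriv r hr := h.hasDerivAt_deriv r (Ioo_subset_Ioo_right hρ hr)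
  ode r hr := h.ode r (Ioo_subset_Ioo_right hρ hr)
  map_zero := h.map_zero

theorem continuousOn (h : IsRadialSolution m μ ρ g g' g'') : ContinuousOn g (Icc 0 ρ) :=
  fun r hr => (h.hasDerivWithinAt r hr).continuousWithinAt

theorem hasDerivAt (h : IsRadialSolution m μ ρ g g' g'') {r : ℝ} (hr : r ∈ Ioo 0 ρ) :
    HasDerivAt g (g' r) r :=
  (h.hasDerivWithinAt r (Ioo_subset_Icc_self hr)).hasDerivAt (Icc_mem_nhds hr.1 hr.2)

theorem integral_rayleighDeficit_eq_zero (h : IsRadialSolution m μ ρ g g' g'') (hm : 1 ≤ m)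
    (hρ : 0 ≤ ρ) (hρ' : g' ρ = 0) :
    ∫ r in 0..ρ, rayleighDeficit m μ g g' r = 0 := by
  -- along the equation, `rayleighDeficit` is the derivative of `g g' w`
  have hderiv : ∀ r ∈ Ioo 0 ρ, HasDerivAt (fun r => g r * g' r * radialWeight m r)
      (rayleighDeficit m μ g g' r) r := by
    intro r hr
    refine (((h.hasDerivAt hr).mul (h.hasDerivAt_deriv r hr)).mul
      (hasDerivAt_radialWeight hm hr.1.ne')).congr_deriv ?_
    rw [rayleighDeficit, show g'' r = -((((m : ℝ) - 1) / r - r) * g' r) -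
      (μ - ((m : ℝ) - 1) / r ^ 2) * g r by linarith [h.ode r hr], Pi.mul_apply]
    ring
  rw [intervalIntegral.integral_eq_sub_of_hasDerivAt_of_le hρ
    ((h.continuousOn.mul h.continuousOn_deriv).mul (continuous_radialWeight m).continuousOn)
    hderiv
    (intervalIntegrable_rayleighDeficit μ hρ h.hasDerivWithinAt h.continuousOn_deriv h.map_zero)]
  simp [h.map_zero, hρ']

theorem div_sq_le (h : IsRadialSolution m μ ρ g g' g'') (hm : 1 ≤ m) (hρ : 0 < ρ)
    (hρ' : g' ρ = 0) (hpos : ∀ r ∈ Ioo 0 ρ, 0 < g r) :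
    ((m : ℝ) - 1) / ρ ^ 2 ≤ μ := by
  by_contra! hlt
  refine (h.integral_rayleighDeficit_eq_zero hm hρ.le hρ').not_gt
    (intervalIntegral.intervalIntegral_pos_of_pos_on
      (intervalIntegrable_rayleighDeficit μ hρ.le h.hasDerivWithinAt h.continuousOn_deriv
        h.map_zero) (fun r hr => ?_) hρ)
  have hc : (0 : ℝ) ≤ (m : ℝ) - 1 := sub_nonneg.2 (Nat.one_le_cast.2 hm)
  have hcoef : 0 < ((m : ℝ) - 1) / r ^ 2 - μ := by
    have := div_le_div_of_nonneg_left hc (pow_pos hr.1 2) (pow_le_pow_left₀ hr.1.le hr.2.le 2)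
    linarith
  exact mul_pos (add_pos_of_nonneg_of_pos (sq_nonneg _) (mul_pos hcoef (pow_pos (hpos r hr) 2)))
    (radialWeight_pos hr.1)

end IsRadialSolution

section Variational

variable {m : ℕ} {R : ℝ} {φ φ' : ℝ → ℝ}

theorem mu1Ball_le_div (hm : 1 ≤ m) (hR : 0 ≤ R) (hφ : IsRadialTrial R φ φ') :
    mu1Ball m R ≤
      (∫ r in 0..R, (φ' r ^ 2 + ((m : ℝ) - 1) * φ r ^ 2 / r ^ 2) * radialWeight m r) /
        ∫ r in 0..R, φ r ^ 2 * radialWeight m r := by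
  have hc : (0 : ℝ) ≤ (m : ℝ) - 1 := sub_nonneg.2 (Nat.one_le_cast.2 hm)
  refine csInf_le ⟨0, ?_⟩ ⟨φ, φ', hφ, ?_⟩
  · rintro q ⟨ψ, ψ', -, rfl⟩
    refine div_nonneg (setIntegral_nonneg measurableSet_Ioo fun r hr => ?_)
      (setIntegral_nonneg measurableSet_Ioo fun r hr => ?_)
    · exact mul_nonneg (mul_nonneg (add_nonneg (sq_nonneg _)
        (div_nonneg (mul_nonneg hc (sq_nonneg _)) (sq_nonneg _))) (exp_pos _).le)
        (pow_nonneg hr.1.le _)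
    · have := hr.1
      positivity
  · simp only [intervalIntegral.integral_of_le hR, integral_Ioc_eq_integral_Ioo, radialWeight,
      mul_assoc]

theorem integral_rayleighDeficit_nonneg (hm : 1 ≤ m) (hR : 0 ≤ R) (hφ : IsRadialTrial R φ φ')
    (hD : 0 < ∫ r in 0..R, φ r ^ 2 * radialWeight m r) :
    0 ≤ ∫ r in 0..R, rayleighDeficit m (mu1Ball m R) φ φ' r := by
  have hφc : ContinuousOn φ (Icc 0 R) := fun r hr => (hφ.1 r hr).continuousWithinAt
  rw [rayleighDeficit_eq_sub, intervalIntegral.integral_sub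
    (intervalIntegrable_rayleighNumerator _ hR hφ.1 hφ.2.1 hφ.2.2.1)
    ((intervalIntegrable_sq_mul_radialWeight hR hφc).const_mul _),
    intervalIntegral.integral_const_mul, sub_nonneg, ← le_div_iff₀ hD]
  exact mu1Ball_le_div hm hR hφ

theorem isRadialTrial_comp_min {g g' : ℝ → ℝ} {r₀ : ℝ} (hr₀ : r₀ ∈ Ioo 0 R)
    (hg : ∀ r ∈ Icc 0 R, HasDerivWithinAt g (g' r) (Icc 0 R) r)
    (hg'c : ContinuousOn g' (Icc 0 R)) (h0 : g 0 = 0) (hr₀' : g' r₀ = 0) (hgr₀ : g r₀ ≠ 0) :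
    IsRadialTrial R (fun r => g (min r r₀)) (fun r => g' (min r r₀)) := by
  have hmin : MapsTo (fun r => min r r₀) (Icc 0 R) (Icc 0 R) := fun r hr =>
    ⟨le_min hr.1 hr₀.1.le, (min_le_left _ _).trans hr.2⟩
  refine ⟨fun r hr => ?_, hg'c.comp (continuous_id.min continuous_const).continuousOn hmin,
    by simp [hr₀.1.le, h0], by simp [hr₀.2.le, hr₀'], r₀, ⟨hr₀.1.le, hr₀.2.le⟩, by simpa using hgr₀⟩
  have hleft : HasDerivWithinAt (fun r => g (min r r₀)) (g' (min r r₀)) (Icc 0 r₀) r := by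
    by_cases h : r ≤ r₀
    · rw [min_eq_left h]
      exact ((hg r hr).mono (Icc_subset_Icc_right hr₀.2.le)).congr
        (fun x hx => by simp [hx.2]) (by simp [h])
    · exact HasFDerivWithinAt.of_notMem_closure (by rw [closure_Icc]; exact fun hx => h hx.2)
  have hright : HasDerivWithinAt (fun r => g (min r r₀)) (g' (min r r₀)) (Icc r₀ R) r := by
    by_cases h : r₀ ≤ r
    · rw [min_eq_right h, hr₀']
      exact (hasDerivWithinAt_const r _ (g r₀)).congr (fun x hx => by simp [hx.1]) (by simp [h])
    · exact HasFDerivWithinAt.of_notMem_closure (by rw [closure_Icc]; exact fun hx => h hx.1)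
  rw [← Icc_union_Icc_eq_Icc hr₀.1.le hr₀.2.le]
  exact hleft.union hright

end Variational

theorem integral_rayleighDeficit_const_neg {m : ℕ} (hm : 2 ≤ m) {μ C r₀ R : ℝ} (hr₀ : 0 < r₀)
    (hr₀R : r₀ < R) (hC : C ≠ 0) (hμ : ((m : ℝ) - 1) / r₀ ^ 2 ≤ μ) :
    ∫ r in r₀..R, rayleighDeficit m μ (fun _ => C) (fun _ => 0) r < 0 := by
  have hcont : ContinuousOn (rayleighDeficit m μ (fun _ => C) (fun _ => 0)) (uIcc r₀ R) := by
    intro r hr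
    have : r ^ 2 ≠ 0 := pow_ne_zero 2 (hr₀.trans_le (uIcc_of_le hr₀R.le ▸ hr).1).ne'
    unfold rayleighDeficit
    fun_prop (disch := assumption)
  rw [← neg_pos, ← intervalIntegral.integral_neg]
  refine intervalIntegral.intervalIntegral_pos_of_pos_on hcont.intervalIntegrable.neg
    (fun r hr => ?_) hr₀R
  have hc : (0 : ℝ) < (m : ℝ) - 1 := sub_pos.2 (Nat.one_lt_cast.2 hm)
  have hcoef : ((m : ℝ) - 1) / r ^ 2 - μ < 0 := by
    have := div_lt_div_of_pos_left hc (pow_pos hr₀ 2) (pow_lt_pow_left₀ hr.1 hr₀.le two_ne_zero)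
    linarith
  have hC2 : 0 < C ^ 2 := by positivity
  simp only [rayleighDeficit]
  exact neg_pos.2 (mul_neg_of_neg_of_pos (by nlinarith) (radialWeight_pos (hr₀.trans hr.1)))

theorem IsRadialSolution.mu1Ball_lt {m : ℕ} {R r₀ : ℝ} {g g' g'' : ℝ → ℝ}
    (h : IsRadialSolution m (mu1Ball m R) R g g' g'') (hm : 2 ≤ m)
    (hpos : ∀ r ∈ Ioo 0 R, 0 < g r) (hr₀ : r₀ ∈ Ioo 0 R) (hr₀' : g' r₀ = 0) :
    mu1Ball m R < ((m : ℝ) - 1) / r₀ ^ 2 := by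
  set μ := mu1Ball m R
  set φ : ℝ → ℝ := fun r => g (min r r₀)
  set φ' : ℝ → ℝ := fun r => g' (min r r₀)
  have hR : 0 < R := hr₀.1.trans hr₀.2
  have htrial : IsRadialTrial R φ φ' := isRadialTrial_comp_min hr₀ h.hasDerivWithinAt
    h.continuousOn_deriv h.map_zero hr₀' (hpos r₀ hr₀).ne'
  have hφpos : ∀ r ∈ Ioo 0 R, 0 < φ r := fun r hr =>
    hpos _ ⟨lt_min hr.1 hr₀.1, (min_le_right _ _).trans_lt hr₀.2⟩
  have hD : 0 < ∫ r in 0..R, φ r ^ 2 * radialWeight m r :=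
    intervalIntegral.intervalIntegral_pos_of_pos_on
      (intervalIntegrable_sq_mul_radialWeight hR.le fun r hr => (htrial.1 r hr).continuousWithinAt)
      (fun r hr => mul_pos (pow_pos (hφpos r hr) 2) (radialWeight_pos hr.1)) hR
  have hint := intervalIntegrable_rayleighDeficit (m := m) μ hR.le htrial.1 htrial.2.1 htrial.2.2.1
  have hsplit := intervalIntegral.integral_add_adjacent_intervals
    (hint.mono_set (by
      rw [uIcc_of_le hr₀.1.le, uIcc_of_le hR.le]; exact Icc_subset_Icc_right hr₀.2.le))
    (hint.mono_set (by
      rw [uIcc_of_le hr₀.2.le, uIcc_of_le hR.le]; exact Icc_subset_Icc_left hr₀.1.le))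
  have hinner : ∫ r in 0..r₀, rayleighDeficit m μ φ φ' r = 0 := by
    rw [intervalIntegral.integral_congr (g := rayleighDeficit m μ g g') fun r hr => by
      rw [uIcc_of_le hr₀.1.le] at hr; simp [φ, φ', rayleighDeficit, min_eq_left hr.2]]
    exact (h.mono hr₀.2.le).integral_rayleighDeficit_eq_zero (by omega) hr₀.1.le hr₀'
  have houter : ∫ r in r₀..R, rayleighDeficit m μ φ φ' r =
      ∫ r in r₀..R, rayleighDeficit m μ (fun _ => g r₀) (fun _ => 0) r :=
    intervalIntegral.integral_congr fun r hr => by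
      rw [uIcc_of_le hr₀.2.le] at hr; simp [φ, φ', rayleighDeficit, min_eq_right hr.1, hr₀']
  by_contra! hle
  linarith [integral_rayleighDeficit_nonneg (by omega) hR.le htrial hD,
    integral_rayleighDeficit_const_neg hm hr₀.1 hr₀.2 (hpos r₀ hr₀).ne' hle]

theorem lipschitzWith_secondOrderSystem {a b A B : ℝ} (ha : |a| ≤ A) (hb : |b| ≤ B) :
    LipschitzWith (1 + A + B).toNNReal fun x : ℝ × ℝ => (x.2, -a * x.2 - b * x.1) := by
  refine LipschitzWith.of_dist_le_mul fun x y => ?_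
  simp only [Prod.dist_eq, Real.dist_eq]
  set d := max |x.1 - y.1| |x.2 - y.2|
  have h1 : |x.1 - y.1| ≤ d := le_max_left _ _
  have h2 : |x.2 - y.2| ≤ d := le_max_right _ _
  have hd : 0 ≤ d := (abs_nonneg _).trans h1
  have hA : 0 ≤ A := (abs_nonneg a).trans ha
  have hB : 0 ≤ B := (abs_nonneg b).trans hb
  refine le_trans (max_le ?_ ?_) (mul_le_mul_of_nonneg_right (Real.le_coe_toNNReal _) hd)
  · nlinarith
  · calc |-a * x.2 - b * x.1 - (-a * y.2 - b * y.1)|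
        = |-a * (x.2 - y.2) + -b * (x.1 - y.1)| := by ring_nf
      _ ≤ |a| * |x.2 - y.2| + |b| * |x.1 - y.1| := by
        simpa only [abs_mul, abs_neg] using abs_add_le (-a * (x.2 - y.2)) (-b * (x.1 - y.1))
      _ ≤ A * d + B * d := add_le_add (mul_le_mul ha h2 (abs_nonneg _) hA)
        (mul_le_mul hb h1 (abs_nonneg _) hB)
      _ ≤ (1 + A + B) * d := by nlinarith

section LinearODE

variable {α β : ℝ} {a b g g' g'' : ℝ → ℝ}

theorem eqOn_zero_of_linear_ode (ha : ContinuousOn a (Ioo α β)) (hb : ContinuousOn b (Ioo α β))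
    (hg : ∀ t ∈ Ioo α β, HasDerivAt g (g' t) t) (hg' : ∀ t ∈ Ioo α β, HasDerivAt g' (g'' t) t)
    (hode : ∀ t ∈ Ioo α β, g'' t + a t * g' t + b t * g t = 0)
    {p : ℝ} (hp : p ∈ Ioo α β) (hgp : g p = 0) (hg'p : g' p = 0) :
    EqOn g 0 (Ioo α β) := by
  intro q hq
  obtain ⟨s, hs, hs'⟩ := exists_between (lt_min hp.1 hq.1)
  obtain ⟨e, he', he⟩ := exists_between (max_lt hp.2 hq.2)
  have hse : Icc s e ⊆ Ioo α β := fun t ht => ⟨hs.trans_le ht.1, ht.2.trans_lt he⟩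
  have hsub : Ioo s e ⊆ Ioo α β := Ioo_subset_Icc_self.trans hse
  obtain ⟨A, hA⟩ := isCompact_Icc.exists_bound_of_continuousOn (ha.mono hse)
  obtain ⟨B, hB⟩ := isCompact_Icc.exists_bound_of_continuousOn (hb.mono hse)
  -- uniqueness for the first-order system `(g, g')' = (g', -a g' - b g)`, Lipschitz on `[s, e]`
  have huniq := ODE_solution_unique_of_mem_Icc (t₀ := p) (s := fun _ => univ)
    (v := fun t x => (x.2, -a t * x.2 - b t * x.1)) (f := fun t => (g t, g' t)) (g := 0)
    (fun t ht => (lipschitzWith_secondOrderSystem (hA t (Ioo_subset_Icc_self ht))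
      (hB t (Ioo_subset_Icc_self ht))).lipschitzOnWith)
    ⟨hs'.trans_le (min_le_left p q), (le_max_left p q).trans_lt he'⟩
    (fun t ht =>
      ((hg t (hse ht)).continuousAt.prodMk (hg' t (hse ht)).continuousAt).continuousWithinAt)
    (fun t ht => (hg t (hsub ht)).prodMk
      ((hg' t (hsub ht)).congr_deriv (by linarith [hode t (hsub ht)])))
    (fun _ _ => mem_univ _) continuousOn_const
    (fun t _ => (hasDerivAt_const t (0 : ℝ × ℝ)).congr_deriv (by simp [Prod.zero_eq_mk]))
    (fun _ _ => mem_univ _)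
    (by simp [hgp, hg'p])
  exact congrArg Prod.fst
    (huniq ⟨(hs'.trans_le (min_le_right p q)).le, (le_max_right p q).trans (he'.le)⟩)

theorem pos_of_linear_ode (ha : ContinuousOn a (Ioo α β)) (hb : ContinuousOn b (Ioo α β))
    (hg : ∀ t ∈ Ioo α β, HasDerivAt g (g' t) t) (hg' : ∀ t ∈ Ioo α β, HasDerivAt g' (g'' t) t)
    (hode : ∀ t ∈ Ioo α β, g'' t + a t * g' t + b t * g t = 0)
    (hnonneg : ∀ t ∈ Ioo α β, 0 ≤ g t) (hne : ∃ t ∈ Ioo α β, g t ≠ 0) :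
    ∀ t ∈ Ioo α β, 0 < g t := by
  intro p hp
  refine (hnonneg p hp).lt_of_ne fun hgp => ?_
  have hmin : IsLocalMin g p :=
    Filter.eventually_of_mem (Ioo_mem_nhds hp.1 hp.2) fun t ht => hgp ▸ hnonneg t ht
  obtain ⟨t, ht, hgt⟩ := hne
  exact hgt (eqOn_zero_of_linear_ode ha hb hg hg' hode hp hgp.symm
    (hmin.hasDerivAt_eq_zero (hg p hp)) ht)

end LinearODE

theorem IsRadialSolution.pos {m : ℕ} {μ ρ : ℝ} {g g' g'' : ℝ → ℝ}
    (h : IsRadialSolution m μ ρ g g' g'') (hnonneg : ∀ r ∈ Icc 0 ρ, 0 ≤ g r)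
    (hne : ∃ r ∈ Icc 0 ρ, g r ≠ 0) : ∀ r ∈ Ioo 0 ρ, 0 < g r := by
  intro r hr
  have hρ : 0 < ρ := hr.1.trans hr.2
  have hne' : ∃ r ∈ Ioo 0 ρ, g r ≠ 0 := by
    by_contra! hzero
    obtain ⟨r, hr, hgr⟩ := hne
    exact hgr (EqOn.of_subset_closure hzero h.continuousOn continuousOn_const
      Ioo_subset_Icc_self (closure_Ioo hρ.ne).ge hr)
  exact pos_of_linear_ode (a := fun r => ((m : ℝ) - 1) / r - r)
    (b := fun r => μ - ((m : ℝ) - 1) / r ^ 2)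
    (by fun_prop (disch := exact fun r hr => hr.1.ne'))
    (by fun_prop (disch := exact fun r hr => pow_ne_zero 2 hr.1.ne'))
    (fun r => h.hasDerivAt) h.hasDerivAt_deriv h.ode
    (fun r hr => hnonneg r (Ioo_subset_Icc_self hr)) hne' r hr

theorem exists_deriv_eq_zero_of_lt_of_deriv_nonpos {g g' : ℝ → ℝ} {a b : ℝ} (hab : a < b)
    (hgc : ContinuousOn g (Icc a b)) (hg : ∀ t ∈ Ioo a b, HasDerivAt g (g' t) t)
    (hg'c : ContinuousOn g' (Icc a b)) (hlt : g a < g b) (hb : g' b ≤ 0) :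
    ∃ c ∈ Ioc a b, g' c = 0 := by
  obtain ⟨s, hs, hslope⟩ := exists_hasDerivAt_eq_slope g g' hab hgc hg
  have hs' : 0 < g' s := hslope ▸ div_pos (sub_pos.2 hlt) (sub_pos.2 hab)
  obtain ⟨c, hc, hc0⟩ := intermediate_value_Icc' hs.2.le
    (hg'c.mono (Icc_subset_Icc_left hs.1.le)) ⟨hb, hs'.le⟩
  exact ⟨c, ⟨hs.1.trans_le hc.1, hc.2⟩, hc0⟩

theorem radial_eigenfunction_deriv_pos_general
    (m : ℕ) (hm : 2 ≤ m) (R : ℝ) (g g' g'' : ℝ → ℝ)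
    (hg : ∀ r ∈ Icc (0 : ℝ) R, HasDerivWithinAt g (g' r) (Icc (0 : ℝ) R) r)
    (hg'cont : ContinuousOn g' (Icc (0 : ℝ) R))
    (hg' : ∀ r ∈ Ioo (0 : ℝ) R, HasDerivAt g' (g'' r) r)
    (hnonneg : ∀ r ∈ Icc (0 : ℝ) R, 0 ≤ g r)
    (hnontriv : ∃ r ∈ Icc (0 : ℝ) R, g r ≠ 0)
    (hode : ∀ r ∈ Ioo (0 : ℝ) R,
      g'' r + (((m : ℝ) - 1) / r - r) * g' r +
        (mu1Ball m R - ((m : ℝ) - 1) / r ^ 2) * g r = 0)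
    (h0 : g 0 = 0) :
    ∀ r ∈ Ioo (0 : ℝ) R, 0 < g' r := by
  intro r₁ hr₁
  by_contra! hr₁'
  have hsol : IsRadialSolution m (mu1Ball m R) R g g' g'' := ⟨hg, hg'cont, hg', hode, h0⟩
  have hpos := hsol.pos hnonneg hnontriv
  obtain ⟨r₀, hr₀, hr₀'⟩ := exists_deriv_eq_zero_of_lt_of_deriv_nonpos hr₁.1
    (hsol.continuousOn.mono (Icc_subset_Icc_right hr₁.2.le))
    (fun r hr => hsol.hasDerivAt ⟨hr.1, hr.2.trans hr₁.2⟩)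
    (hg'cont.mono (Icc_subset_Icc_right hr₁.2.le)) (h0.symm ▸ hpos r₁ hr₁) hr₁'
  have hr₀R : r₀ < R := hr₀.2.trans_lt hr₁.2
  exact (hsol.mu1Ball_lt hm hpos ⟨hr₀.1, hr₀R⟩ hr₀').not_ge
    ((hsol.mono hr₀R.le).div_sq_le (by omega) hr₀.1 hr₀'
      fun r hr => hpos r ⟨hr.1, hr.2.trans hr₀R⟩)

/-- **Lemma 2.3, inequality (2.7).** Let `m ≥ 2`, `R > 0`, and let
`g ∈ C¹([0,R]) ∩ C²((0,R))` be a nonnegative, not identically zero solution of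
`g'' + ((m-1)/r - r) g' + (μ₁(B_R) - (m-1)/r²) g = 0` on `(0,R)` with
`g(0) = 0` and `g'(R) = 0`. Then `g'(r) > 0` for all `r ∈ (0,R)`. -/
theorem radial_eigenfunction_deriv_pos
    (m : ℕ) (hm : 2 ≤ m) (R : ℝ) (hR : 0 < R) (g g' g'' : ℝ → ℝ)
    (hg : ∀ r ∈ Icc (0 : ℝ) R, HasDerivWithinAt g (g' r) (Icc (0 : ℝ) R) r)
    (hg'cont : ContinuousOn g' (Icc (0 : ℝ) R))
    (hg' : ∀ r ∈ Ioo (0 : ℝ) R, HasDerivAt g' (g'' r) r)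
    (hg''cont : ContinuousOn g'' (Ioo (0 : ℝ) R))
    (hnonneg : ∀ r ∈ Icc (0 : ℝ) R, 0 ≤ g r)
    (hnontriv : ∃ r ∈ Icc (0 : ℝ) R, g r ≠ 0)
    (hode : ∀ r ∈ Ioo (0 : ℝ) R,
      g'' r + (((m : ℝ) - 1) / r - r) * g' r +
        (mu1Ball m R - ((m : ℝ) - 1) / r ^ 2) * g r = 0)
    (h0 : g 0 = 0) (hRderiv : g' R = 0) :
    ∀ r ∈ Ioo (0 : ℝ) R, 0 < g' r :=
  radial_eigenfunction_deriv_pos_general m hm R g g' g'' hg hg'cont hg' hnonneg hnontriv hode h0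
end
end

section
/- Let m ≥ 2 and R > 0, and let g ∈ C¹([0,R]) ∩ C²((0,R)) be a nonnegative, not identically zero function satisfying g''(r) + ((m−1)/r − r) g'(r) + (μ_1(B_R) − (m−1)/r²) g(r) = 0 for all r ∈ (0,R), with g(0) = 0 and g'(R) = 0. Then g'(r) − g(r)/r ≤ 0 for all r ∈ (0,R]. -/
/-!
With `w(r) = e^{-r²/2} r^{m-1}`, the flux `P = w · (r g' - g) = r² w · (g/r)'` satisfies
`P' = (1 - μ) w r g` by the ODE, and `P(0) = 0`. The Neumann condition gives
`P(R) = -w(R) g(R) ≤ 0`, whereas `∫₀^R w r g > 0`; hence `μ ≥ 1`, so `P` is nonincreasing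
from `0`, and `P ≤ 0` is the claim.
-/

open MeasureTheory Real Set

noncomputable section

def gaussWeight (n : ℕ) (r : ℝ) : ℝ := exp (-r ^ 2 / 2) * r ^ n

def radialFlux (n : ℕ) (g g' : ℝ → ℝ) (r : ℝ) : ℝ := gaussWeight n r * (r * g' r - g r)

lemma gaussWeight_pos (n : ℕ) {r : ℝ} (hr : 0 < r) : 0 < gaussWeight n r := by
  unfold gaussWeight; positivity

lemma continuous_gaussWeight (n : ℕ) : Continuous (gaussWeight n) := by
  unfold gaussWeight; fun_prop

lemma gaussWeight_nonneg (n : ℕ) {r : ℝ} (hr : 0 ≤ r) : 0 ≤ gaussWeight n r := by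
  unfold gaussWeight; positivity

lemma hasDerivAt_gaussWeight (n : ℕ) {s : ℝ} (hs : s ≠ 0) :
    HasDerivAt (gaussWeight n) (gaussWeight n s * (n / s - s)) s := by
  have hquad : HasDerivAt (fun r : ℝ => -r ^ 2 / 2) (-s) s :=
    ((hasDerivAt_pow 2 s).neg.div_const 2).congr_deriv (by ring)
  refine (hquad.exp.mul (hasDerivAt_pow n s)).congr_deriv ?_
  unfold gaussWeight
  rcases n with _ | n
  · simp
  · field_simp
    push_cast
    ring

lemma hasDerivAt_radialFlux {n : ℕ} {μ s : ℝ} {g g' g'' : ℝ → ℝ} (hs : s ≠ 0)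
    (hg : HasDerivAt g (g' s) s) (hg' : HasDerivAt g' (g'' s) s)
    (hode : g'' s + ((n : ℝ) / s - s) * g' s + (μ - (n : ℝ) / s ^ 2) * g s = 0) :
    HasDerivAt (radialFlux n g g') ((1 - μ) * (gaussWeight n s * (s * g s))) s := by
  have hg'' : g'' s = -((n / s - s) * g' s) - (μ - n / s ^ 2) * g s := by linarith
  refine ((hasDerivAt_gaussWeight n hs).mul (((hasDerivAt_id s).mul hg').sub hg)).congr_deriv ?_
  simp only [Pi.mul_apply, Pi.sub_apply, id, hg'']
  field_simp
  ring

lemma radialFlux_nonpos_iff {n : ℕ} {g g' : ℝ → ℝ} {r : ℝ} (hr : 0 < r) :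
    radialFlux n g g' r ≤ 0 ↔ g' r - g r / r ≤ 0 := by
  have hw := gaussWeight_pos n hr
  rw [radialFlux, sub_nonpos, le_div_iff₀ hr]
  constructor <;> intro h <;> nlinarith

section FirstIntegral

variable {n : ℕ} {μ R : ℝ} {g g' g'' : ℝ → ℝ}

lemma radialFlux_eq_integral (hgc : ContinuousOn g (Icc 0 R)) (hg'c : ContinuousOn g' (Icc 0 R))
    (hg : ∀ s ∈ Ioo 0 R, HasDerivAt g (g' s) s) (hg' : ∀ s ∈ Ioo 0 R, HasDerivAt g' (g'' s) s)
    (hode : ∀ s ∈ Ioo 0 R,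
      g'' s + ((n : ℝ) / s - s) * g' s + (μ - (n : ℝ) / s ^ 2) * g s = 0)
    (h0 : g 0 = 0) {r : ℝ} (hr : r ∈ Icc 0 R) :
    radialFlux n g g' r = (1 - μ) * ∫ s in (0 : ℝ)..r, gaussWeight n s * (s * g s) := by
  have hsub : Icc 0 r ⊆ Icc 0 R := Icc_subset_Icc_right hr.2
  have hw := (continuous_gaussWeight n).continuousOn (s := Icc 0 R)
  have hflux_cont : ContinuousOn (radialFlux n g g') (Icc 0 r) :=
    (hw.mul ((continuousOn_id.mul hg'c).sub hgc)).mono hsub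
  have hdensity_int : IntervalIntegrable (fun s => (1 - μ) * (gaussWeight n s * (s * g s)))
      volume 0 r :=
    ((continuousOn_const.mul (hw.mul (continuousOn_id.mul hgc))).mono
      hsub).intervalIntegrable_of_Icc hr.1
  have hderiv : ∀ s ∈ Ioo 0 r, HasDerivAt (radialFlux n g g')
      ((1 - μ) * (gaussWeight n s * (s * g s))) s := fun s hs =>
    have hsR : s ∈ Ioo 0 R := ⟨hs.1, hs.2.trans_le hr.2⟩
    hasDerivAt_radialFlux hs.1.ne' (hg s hsR) (hg' s hsR) (hode s hsR)
  have hflux0 : radialFlux n g g' 0 = 0 := by simp [radialFlux, h0]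
  rw [← intervalIntegral.integral_const_mul,
    intervalIntegral.integral_eq_sub_of_hasDerivAt_of_le hr.1 hflux_cont hderiv hdensity_int,
    hflux0, sub_zero]

lemma integral_gaussWeight_mul_pos (hgc : ContinuousOn g (Icc 0 R))
    (hnonneg : ∀ r ∈ Icc 0 R, 0 ≤ g r) (hnontriv : ∃ r ∈ Icc 0 R, g r ≠ 0) (h0 : g 0 = 0) :
    0 < ∫ s in (0 : ℝ)..R, gaussWeight n s * (s * g s) := by
  obtain ⟨r₀, hr₀, hgr₀⟩ := hnontriv
  have hr₀pos : 0 < r₀ := hr₀.1.lt_of_ne (by rintro rfl; exact hgr₀ h0)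
  refine intervalIntegral.integral_pos (hr₀pos.trans_le hr₀.2)
    ((continuous_gaussWeight n).continuousOn.mul (continuousOn_id.mul hgc)) (fun s hs => ?_)
    ⟨r₀, hr₀, ?_⟩
  · exact mul_nonneg (gaussWeight_nonneg n hs.1.le)
      (mul_nonneg hs.1.le (hnonneg s (Ioc_subset_Icc_self hs)))
  · exact mul_pos (gaussWeight_pos n hr₀pos) (mul_pos hr₀pos ((hnonneg r₀ hr₀).lt_of_ne' hgr₀))

lemma integral_gaussWeight_mul_nonneg (hnonneg : ∀ r ∈ Icc 0 R, 0 ≤ g r) {r : ℝ}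
    (hr : r ∈ Icc 0 R) : 0 ≤ ∫ s in (0 : ℝ)..r, gaussWeight n s * (s * g s) :=
  intervalIntegral.integral_nonneg hr.1 fun s hs =>
    mul_nonneg (gaussWeight_nonneg n hs.1) (mul_nonneg hs.1 (hnonneg s ⟨hs.1, hs.2.trans hr.2⟩))

lemma one_le_of_nonneg_solution (hgc : ContinuousOn g (Icc 0 R))
    (hg'c : ContinuousOn g' (Icc 0 R)) (hg : ∀ s ∈ Ioo 0 R, HasDerivAt g (g' s) s)
    (hg' : ∀ s ∈ Ioo 0 R, HasDerivAt g' (g'' s) s)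
    (hode : ∀ s ∈ Ioo 0 R,
      g'' s + ((n : ℝ) / s - s) * g' s + (μ - (n : ℝ) / s ^ 2) * g s = 0)
    (hnonneg : ∀ r ∈ Icc 0 R, 0 ≤ g r) (hnontriv : ∃ r ∈ Icc 0 R, g r ≠ 0) (h0 : g 0 = 0)
    (hg'R : g' R = 0) : 1 ≤ μ := by
  have hR : 0 ≤ R := by
    obtain ⟨r, hr, -⟩ := hnontriv
    exact hr.1.trans hr.2
  have hfluxR : radialFlux n g g' R ≤ 0 := by
    have := hnonneg R ⟨hR, le_rfl⟩
    simp only [radialFlux, hg'R, mul_zero, zero_sub, mul_neg, neg_nonpos]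
    exact mul_nonneg (gaussWeight_nonneg n hR) this
  have hI := integral_gaussWeight_mul_pos (n := n) hgc hnonneg hnontriv h0
  rw [radialFlux_eq_integral hgc hg'c hg hg' hode h0 ⟨hR, le_rfl⟩] at hfluxR
  by_contra! hμ
  linarith [mul_pos (sub_pos.2 hμ) hI]

end FirstIntegral

theorem radial_eigenfunction_deriv_le_general
    (m : ℕ) (hm : 2 ≤ m) (R : ℝ) (g g' g'' : ℝ → ℝ)
    (hg : ∀ r ∈ Icc (0 : ℝ) R, HasDerivWithinAt g (g' r) (Icc (0 : ℝ) R) r)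
    (hg'cont : ContinuousOn g' (Icc (0 : ℝ) R))
    (hg' : ∀ r ∈ Ioo (0 : ℝ) R, HasDerivAt g' (g'' r) r)
    (hnonneg : ∀ r ∈ Icc (0 : ℝ) R, 0 ≤ g r)
    (hnontriv : ∃ r ∈ Icc (0 : ℝ) R, g r ≠ 0)
    (hode : ∀ r ∈ Ioo (0 : ℝ) R,
      g'' r + (((m : ℝ) - 1) / r - r) * g' r +
        (mu1Ball m R - ((m : ℝ) - 1) / r ^ 2) * g r = 0)
    (h0 : g 0 = 0) (hRderiv : g' R = 0) :
    ∀ r ∈ Ioc (0 : ℝ) R, g' r - g r / r ≤ 0 := by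
  obtain ⟨n, rfl⟩ : ∃ n, m = n + 1 := ⟨m - 1, by omega⟩
  have hgc : ContinuousOn g (Icc 0 R) := fun s hs => (hg s hs).continuousWithinAt
  have hg_at : ∀ s ∈ Ioo 0 R, HasDerivAt g (g' s) s := fun s hs =>
    (hg s (Ioo_subset_Icc_self hs)).hasDerivAt (Icc_mem_nhds hs.1 hs.2)
  have hode_n : ∀ s ∈ Ioo 0 R, g'' s + ((n : ℝ) / s - s) * g' s +
      (mu1Ball (n + 1) R - (n : ℝ) / s ^ 2) * g s = 0 := by
    simpa only [Nat.cast_add_one, add_sub_cancel_right] using hode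
  have hμ := one_le_of_nonneg_solution hgc hg'cont hg_at hg' hode_n hnonneg hnontriv h0 hRderiv
  intro r hr
  rw [← radialFlux_nonpos_iff (n := n) hr.1,
    radialFlux_eq_integral hgc hg'cont hg_at hg' hode_n h0 (Ioc_subset_Icc_self hr)]
  exact mul_nonpos_of_nonpos_of_nonneg (by linarith)
    (integral_gaussWeight_mul_nonneg hnonneg (Ioc_subset_Icc_self hr))

/-- **Lemma 2.3, inequality (2.8).** Let `m ≥ 2`, `R > 0`, and let
`g ∈ C¹([0,R]) ∩ C²((0,R))` be a nonnegative, not identically zero solution of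
`g'' + ((m-1)/r - r) g' + (μ₁(B_R) - (m-1)/r²) g = 0` on `(0,R)` with
`g(0) = 0` and `g'(R) = 0`. Then `g'(r) - g(r)/r ≤ 0` for all `r ∈ (0,R]`. -/
theorem radial_eigenfunction_deriv_le
    (m : ℕ) (hm : 2 ≤ m) (R : ℝ) (hR : 0 < R) (g g' g'' : ℝ → ℝ)
    (hg : ∀ r ∈ Icc (0 : ℝ) R, HasDerivWithinAt g (g' r) (Icc (0 : ℝ) R) r)
    (hg'cont : ContinuousOn g' (Icc (0 : ℝ) R))
    (hg' : ∀ r ∈ Ioo (0 : ℝ) R, HasDerivAt g' (g'' r) r)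
    (hg''cont : ContinuousOn g'' (Ioo (0 : ℝ) R))
    (hnonneg : ∀ r ∈ Icc (0 : ℝ) R, 0 ≤ g r)
    (hnontriv : ∃ r ∈ Icc (0 : ℝ) R, g r ≠ 0)
    (hode : ∀ r ∈ Ioo (0 : ℝ) R,
      g'' r + (((m : ℝ) - 1) / r - r) * g' r +
        (mu1Ball m R - ((m : ℝ) - 1) / r ^ 2) * g r = 0)
    (h0 : g 0 = 0) (hRderiv : g' R = 0) :
    ∀ r ∈ Ioc (0 : ℝ) R, g' r - g r / r ≤ 0 :=
  radial_eigenfunction_deriv_le_general m hm R g g' g'' hg hg'cont hg' hnonneg hnontriv hode h0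
    hRderiv
end
end
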